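/- arXiv:1807.02841 — 3 statements merged into one kernel-verified Lean document; each statement's English description precedes it below -/
import Mathlib

section
/- Let K be an algebraically closed field with a valuation v : K → ℝ ∪ {∞} whose value group is divisible (e.g. the field of Puiseux series over ℂ with the order valuation). Fix ξ ∈ K and α ∈ ℝ, let B = {η ∈ K : v(η − ξ) ≥ α}, and define ν(f) = inf{v(f(η)) : η ∈ B} for f ∈ K[X]. Then ν is multiplicative: ν(fg) = ν(f) + ν(g) for all f, g ∈ K[X]. In particular ν is a valuation on K[X]. -/
/-!
By `v(f(η)) = v(lc f) + ∑ₐ v(η - a)`, the sum running over the roots `a` of `f`, and the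
ultrametric inequality, every `η` in the ball `B` satisfies `v(η - a) ≥ min(α, v(ξ - a))`.
A nontrivial divisible value group is dense in `ℝ`, so there are `t` with `v t` just above `α`
and different from every `v(ξ - a)`; for `η = ξ + t` each term is then exactly
`min(v t, v(ξ - a))`. Hence `ν(f) = v(lc f) + ∑ₐ min(α, v(ξ - a))`, which is visibly
multiplicative. For the trivial valuation `B` is `{ξ}` or all of `K`, and one point of `B`
minimises `v(f(·))` and `v(g(·))` at the same time.
-/

/-- The Berkovich-type function on `K[X]` obtained by taking the infimum of `v(f(η))` over the
closed ball `B = {η : v(η - ξ) ≥ α}` of center `ξ` and radius `α`.  Values are taken in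
`ℝ ∪ {∞}`, realized as `EReal`; the infimum of the empty set is `∞ = ⊤`. -/
noncomputable def ballInf {K : Type*} [Field K] (v : K → EReal) (ξ : K) (α : ℝ) :
    Polynomial K → EReal :=
  fun f => sInf {r : EReal | ∃ η : K, (α : EReal) ≤ v (η - ξ) ∧ r = v (Polynomial.eval η f)}

open Polynomial

structure IsERealValuation {K : Type*} [Field K] (v : K → EReal) : Prop where
  ne_bot : ∀ a, v a ≠ ⊥
  map_mul : ∀ a b, v (a * b) = v a + v b
  min_le_map_add : ∀ a b, min (v a) (v b) ≤ v (a + b)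
  eq_top_iff : ∀ a, v a = ⊤ ↔ a = 0

namespace IsERealValuation

variable {K : Type*} [Field K] {v : K → EReal} (hv : IsERealValuation v)
include hv

lemma map_zero : v 0 = ⊤ := (hv.eq_top_iff 0).2 rfl

lemma exists_coe_eq {a : K} (ha : a ≠ 0) : ∃ r : ℝ, v a = r := by
  lift v a to ℝ using ⟨fun h => ha ((hv.eq_top_iff a).1 h), hv.ne_bot a⟩ with r
  exact ⟨r, rfl⟩

lemma map_one : v 1 = 0 := by
  obtain ⟨r, hr⟩ := hv.exists_coe_eq (one_ne_zero (α := K))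
  have h := hv.map_mul 1 1
  rw [one_mul, hr, ← EReal.coe_add, EReal.coe_eq_coe_iff] at h
  rw [hr, show r = 0 by linarith, EReal.coe_zero]

lemma map_inv {a : K} (ha : a ≠ 0) : v a⁻¹ = -v a := by
  obtain ⟨r, hr⟩ := hv.exists_coe_eq ha
  obtain ⟨s, hs⟩ := hv.exists_coe_eq (inv_ne_zero ha)
  have h := hv.map_mul a a⁻¹
  rw [mul_inv_cancel₀ ha, hv.map_one, hr, hs, ← EReal.coe_add, ← EReal.coe_zero,
    EReal.coe_eq_coe_iff] at h
  rw [hr, hs, ← EReal.coe_neg, EReal.coe_eq_coe_iff]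
  linarith

lemma map_neg (a : K) : v (-a) = v a := by
  have h : v (-1) = 0 := by
    have := hv.map_inv (neg_ne_zero.2 (one_ne_zero (α := K)))
    obtain ⟨r, hr⟩ := hv.exists_coe_eq (neg_ne_zero.2 (one_ne_zero (α := K)))
    rw [inv_neg, inv_one, hr, ← EReal.coe_neg, EReal.coe_eq_coe_iff] at this
    rw [hr, show r = 0 by linarith, EReal.coe_zero]
  rw [neg_eq_neg_one_mul, hv.map_mul, h, zero_add]

lemma map_add_eq_min_of_ne {a b : K} (h : v a ≠ v b) : v (a + b) = min (v a) (v b) := by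
  wlog hlt : v a < v b generalizing a b
  · rw [add_comm, min_comm]
    exact this h.symm (h.lt_or_gt.resolve_left hlt)
  refine le_antisymm ?_ (hv.min_le_map_add a b)
  have key := hv.min_le_map_add (a + b) (-b)
  rw [add_neg_cancel_right, hv.map_neg] at key
  rw [min_eq_left hlt.le]
  exact (min_le_iff.1 key).resolve_right hlt.not_ge

lemma map_multiset_prod (s : Multiset K) : v s.prod = (s.map v).sum := by
  induction s using Multiset.induction with
  | empty => simpa using hv.map_one
  | cons a s ih => simp [hv.map_mul, ih]

lemma map_eval [IsAlgClosed K] (f : K[X]) (η : K) :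
    v (f.eval η) = v f.leadingCoeff + (f.roots.map fun a => v (η - a)).sum := by
  conv_lhs => rw [(IsAlgClosed.splits f).eq_prod_roots]
  simp [eval_multiset_prod, hv.map_mul, hv.map_multiset_prod, Multiset.map_map]

def valueGroup : AddSubgroup ℝ where
  carrier := Real.toEReal ⁻¹' Set.range v
  zero_mem' := ⟨1, hv.map_one⟩
  add_mem' := by
    rintro _ _ ⟨a, ha⟩ ⟨b, hb⟩
    exact ⟨a * b, by rw [hv.map_mul, ha, hb, EReal.coe_add]⟩
  neg_mem' := by
    rintro r ⟨a, ha⟩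
    have ha0 : a ≠ 0 := fun h => EReal.coe_ne_top r (by rw [← ha, h, hv.map_zero])
    exact ⟨a⁻¹, by rw [hv.map_inv ha0, ha, EReal.coe_neg]⟩

lemma dense_coe_preimage_range (hdiv : ∀ (a : K) (n : ℕ), 0 < n → ∃ b : K, n • v b = v a)
    (hnt : ∃ a : K, a ≠ 0 ∧ v a ≠ 0) : Dense (Real.toEReal ⁻¹' Set.range v) := by
  refine hv.valueGroup.dense_of_no_min ?_ ?_
  · obtain ⟨a, ha0, hva⟩ := hnt
    obtain ⟨r, hr⟩ := hv.exists_coe_eq ha0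
    refine AddSubgroup.ne_bot_iff_exists_ne_zero.2 ⟨⟨r, a, hr⟩, fun h => hva ?_⟩
    rw [hr, show r = 0 from congrArg Subtype.val h, EReal.coe_zero]
  · rintro ⟨r, ⟨⟨a, ha⟩, hr⟩, hleast⟩
    obtain ⟨b, hb⟩ := hdiv a 2 two_pos
    have hb0 : b ≠ 0 := by
      rintro rfl
      rw [hv.map_zero, two_nsmul, EReal.top_add_top, ha] at hb
      exact EReal.coe_ne_top r hb.symm
    obtain ⟨s, hs⟩ := hv.exists_coe_eq hb0
    rw [hs, ha, ← EReal.coe_nsmul, EReal.coe_eq_coe_iff, two_nsmul] at hb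
    have := hleast ⟨⟨b, hs⟩, by linarith⟩
    linarith

end IsERealValuation

section BallInf

variable {K : Type*} [Field K]

noncomputable def ballInfRoots (v : K → EReal) (ξ : K) (α : ℝ) (f : K[X]) : EReal :=
  v f.leadingCoeff + (f.roots.map fun a => min (α : EReal) (v (ξ - a))).sum

lemma ballInf_eq_of_forall_le {v : K → EReal} {ξ η₀ : K} {α : ℝ} {f : K[X]}
    (hη₀ : (α : EReal) ≤ v (η₀ - ξ))
    (hmin : ∀ η, (α : EReal) ≤ v (η - ξ) → v (f.eval η₀) ≤ v (f.eval η)) :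
    ballInf v ξ α f = v (f.eval η₀) :=
  IsLeast.csInf_eq ⟨⟨η₀, hη₀, rfl⟩, by rintro _ ⟨η, hη, rfl⟩; exact hmin η hη⟩

lemma ballInfRoots_le_add {v : K → EReal} {ξ : K} {α β : ℝ} (hαβ : α ≤ β) (f : K[X]) :
    ballInfRoots v ξ β f ≤ ballInfRoots v ξ α f + ((f.roots.card * (β - α) : ℝ) : EReal) := by
  have hterm : ∀ s : EReal, min (β : EReal) s ≤ min (α : EReal) s + ((β - α : ℝ) : EReal) := by
    intro s
    rcases le_total s α with hs | hs
    · rw [min_eq_right (hs.trans (EReal.coe_le_coe_iff.2 hαβ)), min_eq_right hs]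
      exact le_add_of_nonneg_right (EReal.coe_nonneg.2 (sub_nonneg.2 hαβ))
    · rw [min_eq_left hs, ← EReal.coe_add, add_sub_cancel]
      exact min_le_left _ _
  have hsum := Multiset.sum_map_le_sum_map _ _ fun a (_ : a ∈ f.roots) => hterm (v (ξ - a))
  rw [Multiset.sum_map_add, Multiset.map_const', Multiset.sum_replicate, ← EReal.coe_nsmul,
    nsmul_eq_mul] at hsum
  rw [ballInfRoots, ballInfRoots, add_assoc]
  exact add_le_add le_rfl hsum

namespace IsERealValuation

variable {v : K → EReal} (hv : IsERealValuation v)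
include hv

lemma ballInf_mul_of_forall_le {ξ η₀ : K} {α : ℝ} {f g : K[X]}
    (hη₀ : (α : EReal) ≤ v (η₀ - ξ))
    (hf : ∀ η, (α : EReal) ≤ v (η - ξ) → v (f.eval η₀) ≤ v (f.eval η))
    (hg : ∀ η, (α : EReal) ≤ v (η - ξ) → v (g.eval η₀) ≤ v (g.eval η)) :
    ballInf v ξ α (f * g) = ballInf v ξ α f + ballInf v ξ α g := by
  have hfg : ∀ η, (α : EReal) ≤ v (η - ξ) → v ((f * g).eval η₀) ≤ v ((f * g).eval η) :=
    fun η hη => by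
      simp only [eval_mul, hv.map_mul]
      exact add_le_add (hf η hη) (hg η hη)
  rw [ballInf_eq_of_forall_le hη₀ hfg, ballInf_eq_of_forall_le hη₀ hf,
    ballInf_eq_of_forall_le hη₀ hg, eval_mul, hv.map_mul]

lemma ballInf_mul_of_forall_eq_zero [Infinite K] (htriv : ∀ a : K, a ≠ 0 → v a = 0)
    (ξ : K) (α : ℝ) (f g : K[X]) :
    ballInf v ξ α (f * g) = ballInf v ξ α f + ballInf v ξ α g := by
  classical
  have hnonneg : ∀ a, 0 ≤ v a := fun a => by
    rcases eq_or_ne a 0 with rfl | ha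
    · simp [hv.map_zero]
    · rw [htriv a ha]
  rcases lt_or_ge 0 α with hα | hα
  · have hball : ∀ η, (α : EReal) ≤ v (η - ξ) → η = ξ := fun η hη => by
      by_contra hne
      rw [htriv _ (sub_ne_zero.2 hne)] at hη
      exact hα.not_ge (EReal.coe_nonpos.1 hη)
    have hmin : ∀ (h : K[X]) η, (α : EReal) ≤ v (η - ξ) → v (h.eval ξ) ≤ v (h.eval η) :=
      fun h η hη => by rw [hball η hη]
    exact hv.ballInf_mul_of_forall_le (by simp [hv.map_zero]) (hmin f) (hmin g)
  · obtain ⟨η₀, hη₀⟩ := Infinite.exists_notMem_finset (f.roots + g.roots).toFinset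
    simp only [Multiset.mem_toFinset, Multiset.mem_add, not_or] at hη₀
    have hmin : ∀ h : K[X], η₀ ∉ h.roots →
        ∀ η, (α : EReal) ≤ v (η - ξ) → v (h.eval η₀) ≤ v (h.eval η) := by
      intro h hη₀h η _
      rcases eq_or_ne h 0 with rfl | h0
      · simp
      · rw [htriv _ fun hroot => hη₀h ((mem_roots h0).2 hroot)]
        exact hnonneg _
    exact hv.ballInf_mul_of_forall_le ((EReal.coe_nonpos.2 hα).trans (hnonneg _))
      (hmin f hη₀.1) (hmin g hη₀.2)

lemma ballInfRoots_ne_bot (ξ : K) (α : ℝ) (f : K[X]) : ballInfRoots v ξ α f ≠ ⊥ := by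
  refine EReal.add_ne_bot_iff.2 ⟨hv.ne_bot _, ?_⟩
  refine Multiset.sum_induction (· ≠ ⊥) _ (fun _ _ ha hb => EReal.add_ne_bot_iff.2 ⟨ha, hb⟩)
    EReal.zero_ne_bot ?_
  simp only [Multiset.mem_map]
  rintro _ ⟨a, _, rfl⟩
  exact min_ne_bot (EReal.coe_ne_bot α) (hv.ne_bot _)

lemma ballInfRoots_mul (ξ : K) (α : ℝ) (f g : K[X]) :
    ballInfRoots v ξ α (f * g) = ballInfRoots v ξ α f + ballInfRoots v ξ α g := by
  have hzero : ballInfRoots v ξ α 0 = ⊤ := by simp [ballInfRoots, hv.map_zero]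
  rcases eq_or_ne f 0 with rfl | hf
  · rw [zero_mul, hzero, EReal.top_add_of_ne_bot (hv.ballInfRoots_ne_bot ξ α g)]
  rcases eq_or_ne g 0 with rfl | hg
  · rw [mul_zero, hzero, EReal.add_top_of_ne_bot (hv.ballInfRoots_ne_bot ξ α f)]
  rw [ballInfRoots, ballInfRoots, ballInfRoots, leadingCoeff_mul, hv.map_mul,
    roots_mul (mul_ne_zero hf hg), Multiset.map_add, Multiset.sum_add]
  exact add_add_add_comm _ _ _ _

variable [IsAlgClosed K]

lemma ballInfRoots_le_map_eval {ξ η : K} {α : ℝ} (hη : (α : EReal) ≤ v (η - ξ)) (f : K[X]) :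
    ballInfRoots v ξ α f ≤ v (f.eval η) := by
  rw [hv.map_eval]
  refine add_le_add le_rfl (Multiset.sum_map_le_sum_map _ _ fun a _ => ?_)
  calc min (α : EReal) (v (ξ - a)) ≤ min (v (η - ξ)) (v (ξ - a)) := min_le_min hη le_rfl
    _ ≤ v (η - ξ + (ξ - a)) := hv.min_le_map_add _ _
    _ = v (η - a) := by rw [sub_add_sub_cancel]

lemma ballInfRoots_le_ballInf (ξ : K) (α : ℝ) (f : K[X]) :
    ballInfRoots v ξ α f ≤ ballInf v ξ α f :=
  le_sInf <| by
    rintro _ ⟨η, hη, rfl⟩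
    exact hv.ballInfRoots_le_map_eval hη f

lemma map_eval_add_eq_ballInfRoots {ξ t : K} {β : ℝ} {f : K[X]} (hvt : v t = β)
    (ht : ∀ a ∈ f.roots, v t ≠ v (ξ - a)) :
    v (f.eval (ξ + t)) = ballInfRoots v ξ β f := by
  rw [hv.map_eval, ballInfRoots, ← hvt]
  congr 2
  refine Multiset.map_congr rfl fun a ha => ?_
  rw [show ξ + t - a = t + (ξ - a) by ring, hv.map_add_eq_min_of_ne (ht a ha)]

lemma ballInf_le_ballInfRoots (hdense : Dense (Real.toEReal ⁻¹' Set.range v))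
    (ξ : K) (α : ℝ) (f : K[X]) : ballInf v ξ α f ≤ ballInfRoots v ξ α f := by
  refine EReal.le_of_forall_lt_iff_le.1 fun z hz => ?_
  obtain ⟨y, hy, hyz⟩ := EReal.lt_iff_exists_real_btwn.1 hz
  have hyz' : 0 < z - y := sub_pos.2 (EReal.coe_lt_coe_iff.1 hyz)
  set n := f.roots.card
  have hbad : (Real.toEReal ⁻¹' {s | s ∈ f.roots.map fun a => v (ξ - a)}).Finite :=
    (Multiset.finite_toSet _).preimage EReal.coe_injective.injOn
  -- The values `v (ξ - a)` are where `v (t + (ξ - a)) = min (v t) (v (ξ - a))` may fail.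
  obtain ⟨β, ⟨⟨t, hvt⟩, hβbad⟩, hαβ, hβ⟩ :=
    (hdense.sdiff_finite hbad).exists_between (lt_add_of_pos_right α (by positivity :
      0 < (z - y) / (n + 1)))
  have ht : ∀ a ∈ f.roots, v t ≠ v (ξ - a) := fun a ha h =>
    hβbad <| by
      rw [Set.mem_preimage, ← hvt, h]
      exact Multiset.mem_map_of_mem (fun a => v (ξ - a)) ha
  have hn : (n : ℝ) * (β - α) ≤ z - y := by
    have := (lt_div_iff₀' (by positivity)).1 (sub_lt_iff_lt_add'.2 hβ)
    nlinarith
  have hη : (α : EReal) ≤ v (ξ + t - ξ) := by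
    rw [add_sub_cancel_left, hvt]
    exact EReal.coe_le_coe_iff.2 hαβ.le
  calc ballInf v ξ α f ≤ v (f.eval (ξ + t)) := sInf_le ⟨ξ + t, hη, rfl⟩
    _ = ballInfRoots v ξ β f := hv.map_eval_add_eq_ballInfRoots hvt ht
    _ ≤ ballInfRoots v ξ α f + ((n * (β - α) : ℝ) : EReal) := ballInfRoots_le_add hαβ.le f
    _ ≤ y + ((z - y : ℝ) : EReal) := add_le_add hy.le (EReal.coe_le_coe_iff.2 hn)
    _ = z := by rw [← EReal.coe_add, add_sub_cancel]

lemma ballInf_eq_ballInfRoots (hdense : Dense (Real.toEReal ⁻¹' Set.range v))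
    (ξ : K) (α : ℝ) (f : K[X]) : ballInf v ξ α f = ballInfRoots v ξ α f :=
  le_antisymm (hv.ballInf_le_ballInfRoots hdense ξ α f) (hv.ballInfRoots_le_ballInf ξ α f)

end IsERealValuation

end BallInf

/-- Let `K` be an algebraically closed field with a valuation `v : K → ℝ ∪ {∞}` whose value
group is divisible.  For a center `ξ ∈ K` and a radius `α ∈ ℝ`, the Berkovich ball function
`ν(f) = inf {v(f(η)) : η ∈ B}` on `K[X]` is multiplicative: `ν(fg) = ν(f) + ν(g)`. -/
theorem stmt6 (K : Type*) [Field K] [IsAlgClosed K] (v : K → EReal)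
    (hvbot : ∀ a, v a ≠ ⊥)
    (hmul : ∀ a b, v (a * b) = v a + v b)
    (hadd : ∀ a b, min (v a) (v b) ≤ v (a + b))
    (hzero : ∀ a, v a = ⊤ ↔ a = 0)
    (hdiv : ∀ (a : K) (n : ℕ), 0 < n → ∃ b : K, n • v b = v a)
    (ξ : K) (α : ℝ) (f g : Polynomial K) :
    ballInf v ξ α (f * g) = ballInf v ξ α f + ballInf v ξ α g := by
  have hv : IsERealValuation v := ⟨hvbot, hmul, hadd, hzero⟩
  by_cases htriv : ∀ a : K, a ≠ 0 → v a = 0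
  · exact hv.ballInf_mul_of_forall_eq_zero htriv ξ α f g
  push Not at htriv
  have hdense := hv.dense_coe_preimage_range hdiv htriv
  simp only [hv.ballInf_eq_ballInfRoots hdense, hv.ballInfRoots_mul]
end

section
/- There exists a partially ordered set satisfying: (1) a unique minimal element exists; (2) for every P, the down-set {Q : Q ⪯ P} is order-isomorphic to a compact real interval; (3) every totally ordered convex subset is order-isomorphic to a real interval; but in which some pair of elements has no infimum. Concretely, the quotient of two disjoint copies of [0,1] glued by the identity along [0,1), with the induced order, has these properties: the two images of the point 1 have no infimum. -/
/-- Two copies of `[0,1]` glued along `[0,1)`: the common part `[0,1)` plus two top points. -/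
inductive DPT : Type
  | pt (x : Set.Ico (0:ℝ) 1) : DPT
  | top (b : Bool) : DPT

namespace DPT

def tle : DPT → DPT → Prop
  | .pt x, .pt y => (x : ℝ) ≤ y
  | .pt _, .top _ => True
  | .top _, .pt _ => False
  | .top b, .top c => b = c

instance instPO : PartialOrder DPT where
  le := tle
  lt a b := tle a b ∧ ¬ tle b a
  lt_iff_le_not_ge _ _ := Iff.rfl
  le_refl t := by cases t <;> simp [tle]
  le_trans a b c hab hbc := by
    cases a <;> cases b <;> cases c <;> simp_all [tle]
    exact le_trans hab hbc
  le_antisymm a b hab hba := by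
    cases a <;> cases b <;> simp_all [tle]
    exact Subtype.ext (le_antisymm hab hba)

@[simp] lemma pt_le_pt {x y : Set.Ico (0:ℝ) 1} : pt x ≤ pt y ↔ (x:ℝ) ≤ y := Iff.rfl
@[simp] lemma pt_le_top {x : Set.Ico (0:ℝ) 1} {b : Bool} : pt x ≤ top b := trivial
@[simp] lemma not_top_le_pt {x : Set.Ico (0:ℝ) 1} {b : Bool} : ¬ top b ≤ pt x := fun h => h
@[simp] lemma top_le_top {b c : Bool} : top b ≤ top c ↔ b = c := Iff.rfl

def f : DPT → ℝ
  | .pt x => x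
  | .top _ => 1

@[simp] lemma f_pt (x : Set.Ico (0:ℝ) 1) : f (pt x) = x := rfl
@[simp] lemma f_top (b : Bool) : f (top b) = 1 := rfl

lemma f_mono {a b : DPT} (h : a ≤ b) : f a ≤ f b := by
  cases a with
  | pt x => cases b with
    | pt y => exact h
    | top c => exact le_of_lt x.2.2
  | top c => cases b with
    | pt y => exact absurd h not_top_le_pt
    | top d => exact le_refl _

lemma f_injOn {a b : DPT} (hc : a ≤ b ∨ b ≤ a) (h : f a = f b) : a = b := by
  cases a with
  | pt x => cases b with
    | pt y => exact congrArg pt (Subtype.ext h)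
    | top c => exact absurd h (by simpa using ne_of_lt x.2.2)
  | top c => cases b with
    | pt y => exact absurd h.symm (by simpa using ne_of_lt y.2.2)
    | top d => rcases hc with h' | h' <;> simp_all

lemma f_le_iff {a b : DPT} (hc : a ≤ b ∨ b ≤ a) : f a ≤ f b ↔ a ≤ b := by
  constructor
  · intro h
    rcases hc with h' | h'
    · exact h'
    · have heq := f_injOn (Or.inr h') (le_antisymm h (f_mono h'))
      exact heq ▸ le_refl _
  · exact f_mono

lemma f_nonneg (a : DPT) : 0 ≤ f a := by
  cases a with
  | pt x => exact x.2.1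
  | top _ => norm_num

lemma f_le_one (a : DPT) : f a ≤ 1 := by
  cases a with
  | pt x => exact le_of_lt x.2.2
  | top _ => simp

lemma pt_le' {w : Set.Ico (0:ℝ) 1} {b : DPT} (h : (w:ℝ) ≤ f b) : pt w ≤ b := by
  cases b with
  | pt y => exact h
  | top c => simp

/-- An order isomorphism from a chain onto its image under `f`. -/
noncomputable def chainIso (s : Set DPT) (hs : IsChain (· ≤ ·) s) : s ≃o f '' s where
  toEquiv := Equiv.Set.imageOfInjOn f s (by
    intro a ha b hb h
    rcases eq_or_ne a b with h' | h'
    · exact h'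
    · exact f_injOn (hs ha hb h') h)
  map_rel_iff' := by
    rintro ⟨a, ha⟩ ⟨b, hb⟩
    simp only [Equiv.Set.imageOfInjOn, Equiv.coe_fn_mk, Subtype.mk_le_mk]
    rcases eq_or_ne a b with rfl | h'
    · simp
    · exact f_le_iff (hs ha hb h')

lemma iic_chain (P : DPT) : IsChain (· ≤ ·) (Set.Iic P) := by
  intro a ha b hb _
  cases a with
  | pt y => cases b with
    | pt z => simpa using le_total (y:ℝ) z
    | top d => left; simp
  | top c => cases b with
    | pt z => right; simp
    | top d =>
      cases P with
      | pt x => exact absurd (Set.mem_Iic.mp ha) not_top_le_pt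
      | top e =>
        have h1 : c = e := ha
        have h2 : d = e := hb
        left; simp [h1, h2]

lemma image_Iic (P : DPT) : f '' Set.Iic P = Set.Icc 0 (f P) := by
  ext w
  constructor
  · rintro ⟨q, hq, rfl⟩
    exact ⟨f_nonneg q, f_mono hq⟩
  · rintro ⟨h0, h1⟩
    rcases lt_or_eq_of_le (le_trans h1 (f_le_one P)) with hw | hw
    · exact ⟨pt ⟨w, h0, hw⟩, pt_le' h1, rfl⟩
    · exact ⟨P, Set.mem_Iic.mpr (le_refl P), by linarith [f_le_one P]⟩

lemma image_ordConnected {s : Set DPT} (hs : IsChain (· ≤ ·) s)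
    (hconv : ∀ a ∈ s, ∀ b ∈ s, ∀ x, a ≤ x → x ≤ b → x ∈ s) :
    (f '' s).OrdConnected := by
  constructor
  rintro _ ⟨a, ha, rfl⟩ _ ⟨b, hb, rfl⟩ w ⟨hwa, hwb⟩
  have hab : a ≤ b := by
    rcases eq_or_ne a b with rfl | h'
    · exact le_refl _
    · exact (f_le_iff (hs ha hb h')).mp (le_trans hwa hwb)
  rcases lt_or_eq_of_le (le_trans hwb (f_le_one b)) with hw | hw
  · have h0 : (0:ℝ) ≤ w := le_trans (f_nonneg a) hwa
    refine ⟨pt ⟨w, h0, hw⟩, hconv a ha b hb _ ?_ (pt_le' hwb), rfl⟩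
    cases a with
    | pt y => exact hwa
    | top c => exact absurd (lt_of_le_of_lt hwa hw) (lt_irrefl _)
  · exact ⟨b, hb, by linarith [f_le_one b]⟩

end DPT



/-- A poset exhibiting the "double point" pathology: it satisfies the first three axioms of a
rooted ℝ-tree — (1) a unique minimal element; (2) every principal down-set is order-isomorphic
to a compact real interval; (3) every totally ordered convex subset is order-isomorphic to an
interval of ℝ — but some pair of elements has no infimum. -/
def DoublePointPathology (T : Type) [PartialOrder T] : Prop :=
  (∃! R : T, ∀ P : T, R ≤ P) ∧
  (∀ P : T, ∃ (a b : ℝ), a ≤ b ∧ Nonempty (Set.Iic P ≃o Set.Icc a b)) ∧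
  (∀ s : Set T, IsChain (· ≤ ·) s →
      (∀ a ∈ s, ∀ b ∈ s, ∀ x, a ≤ x → x ≤ b → x ∈ s) →
      ∃ I : Set ℝ, I.OrdConnected ∧ Nonempty (s ≃o I)) ∧
  (∃ a b : T, ¬ ∃ m, IsGLB {a, b} m)

/-- There exists a partially ordered set satisfying the first three rooted ℝ-tree axioms in
which some pair of elements has no infimum (e.g. two copies of `[0,1]` glued along `[0,1)`). -/
theorem stmt14 : ∃ (T : Type) (inst : PartialOrder T), @DoublePointPathology T inst := by
  refine ⟨DPT, inferInstance, ?_, ?_, ?_, ?_⟩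
  · -- unique minimum
    refine ⟨DPT.pt ⟨0, le_refl _, one_pos⟩, fun P => ?_, fun y hy => ?_⟩
    · cases P with
      | pt x => exact x.2.1
      | top b => simp
    · exact le_antisymm (hy _) (by
        cases y with
        | pt x => exact x.2.1
        | top b => exact absurd (hy (DPT.pt ⟨0, le_refl _, one_pos⟩)) DPT.not_top_le_pt)
  · -- principal down-sets
    intro P
    refine ⟨0, DPT.f P, DPT.f_nonneg P, ?_⟩
    have h1 := DPT.chainIso (Set.Iic P) (DPT.iic_chain P)
    rw [DPT.image_Iic P] at h1
    exact ⟨h1⟩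
  · -- convex chains
    intro s hs hconv
    exact ⟨DPT.f '' s, DPT.image_ordConnected hs hconv, ⟨DPT.chainIso s hs⟩⟩
  · -- no infimum
    refine ⟨DPT.top true, DPT.top false, ?_⟩
    rintro ⟨m, hlb, hglb⟩
    cases m with
    | top b =>
      have h1 : b = true := hlb (Set.mem_insert _ _)
      have h2 : b = false := hlb (Set.mem_insert_of_mem _ rfl)
      simp [h1] at h2
    | pt x =>
      have hx2 : (x:ℝ) < (x + 1) / 2 := by linarith [x.2.2]
      have hmem : ((x:ℝ) + 1) / 2 ∈ Set.Ico (0:ℝ) 1 := by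
        constructor <;> [linarith [x.2.1]; linarith [x.2.2]]
      have hlow : DPT.pt ⟨((x:ℝ)+1)/2, hmem⟩ ∈ lowerBounds {DPT.top true, DPT.top false} := by
        rintro y (rfl | rfl) <;> simp
      have := hglb hlow
      simp only [DPT.pt_le_pt] at this
      exact absurd this (not_le_of_gt hx2)
end

section
/- Let 𝒯 be a rooted ℝ-tree in which conditions (1) and (2) hold: unique minimal element, and down-sets of points order-isomorphic to compact real intervals. Then the following are equivalent: (a) every nonempty subset of 𝒯 has an infimum; (b) every pair of elements of 𝒯 has an infimum. -/
/-- Novacoski's lemma.  Let `𝒯` be a poset with (1) a unique minimal element and (2) every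
principal down-set order-isomorphic to a compact real interval.  Then every nonempty subset
of `𝒯` has an infimum if and only if every pair of elements has an infimum. -/
theorem stmt15 (T : Type*) [PartialOrder T]
    (h1 : ∃! R : T, ∀ P : T, R ≤ P)
    (h2 : ∀ P : T, ∃ (a b : ℝ), a ≤ b ∧ Nonempty (Set.Iic P ≃o Set.Icc a b)) :
    (∀ s : Set T, s.Nonempty → ∃ m, IsGLB s m) ↔ (∀ a b : T, ∃ m, IsGLB {a, b} m) := by
  constructor
  · intro H a b
    exact H {a, b} ⟨a, Or.inl rfl⟩
  · intro H s ⟨x, hx⟩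
    obtain ⟨R, hR, -⟩ := h1
    obtain ⟨a, b, hab, ⟨e⟩⟩ := h2 x
    haveI : Fact (a ≤ b) := ⟨hab⟩
    -- lower bounds of s, seen inside Iic x
    set L : Set (Set.Iic x) := {ℓ | (ℓ : T) ∈ lowerBounds s} with hL
    -- sup of L inside Iic x via the iso with the complete lattice Icc a b
    set m : Set.Iic x := e.symm (sSup (e '' L)) with hm
    have hlub : IsLUB L m := by
      have h1' : IsLUB (e '' L) (sSup (e '' L)) := isLUB_sSup _
      have := (OrderIso.isLUB_image' e.symm).mpr h1'
      rwa [Set.image_image, show (fun x => e.symm (e x)) = id from funext (fun x => e.symm_apply_apply x), Set.image_id] at this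
    have hRL : (⟨R, hR x⟩ : Set.Iic x) ∈ L := fun y _ => hR y
    refine ⟨(m : T), ?_, ?_⟩
    · -- m is a lower bound of s
      intro y hy
      obtain ⟨p, hp⟩ := H x y
      have hpx : p ≤ x := hp.1 (Or.inl rfl)
      have hpy : p ≤ y := hp.1 (Or.inr rfl)
      have hub : (⟨p, hpx⟩ : Set.Iic x) ∈ upperBounds L := by
        intro ℓ hℓ
        have h1 : (ℓ : T) ≤ x := ℓ.2
        have h2 : (ℓ : T) ≤ y := hℓ hy
        exact hp.2 (fun z hz => by rcases hz with rfl | rfl; exacts [h1, h2])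
      exact le_trans (hlub.2 hub) hpy
    · -- greatest lower bound
      intro ℓ hℓ
      have hℓx : ℓ ≤ x := hℓ hx
      exact hlub.1 (show (⟨ℓ, hℓx⟩ : Set.Iic x) ∈ L from hℓ)
end
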